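/- arXiv:2402.01638 — 2 statements merged into one kernel-verified Lean document; each statement's English description precedes it below -/
import Mathlib

section
/- Let q ≥ 1 and t ≥ 1, and let G be any finite subgroup of the unitary group U(q) of q×q complex unitary matrices. Then (1/|G|)·Σ_{g∈G} |tr(g)|^{2t} ≥ ∫_{U(q)} |tr(U)|^{2t} dU, where the integral is with respect to the unit-normalized Haar measure on U(q). -/
open MeasureTheory Matrix

variable (q : ℕ)

noncomputable instance : MeasurableSpace (Matrix.unitaryGroup (Fin q) ℂ) := borel _
instance : BorelSpace (Matrix.unitaryGroup (Fin q) ℂ) := ⟨rfl⟩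

instance : IsTopologicalGroup (Matrix.unitaryGroup (Fin q) ℂ) where
  continuous_mul := by
    apply continuous_induced_rng.2
    have h1 : Continuous fun p : Matrix.unitaryGroup (Fin q) ℂ × Matrix.unitaryGroup (Fin q) ℂ =>
        ((p.1 : Matrix (Fin q) (Fin q) ℂ), (p.2 : Matrix (Fin q) (Fin q) ℂ)) :=
      (continuous_subtype_val.comp continuous_fst).prodMk (continuous_subtype_val.comp continuous_snd)
    exact (continuous_fst.matrix_mul continuous_snd).comp h1
  continuous_inv := by
    apply continuous_induced_rng.2
    have : (fun a : Matrix.unitaryGroup (Fin q) ℂ => ((a⁻¹ : Matrix.unitaryGroup (Fin q) ℂ) : Matrix (Fin q) (Fin q) ℂ))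
        = fun a : Matrix.unitaryGroup (Fin q) ℂ => star (a : Matrix (Fin q) (Fin q) ℂ) := by
      funext a
      rw [← Unitary.star_eq_inv, Unitary.coe_star]
    show Continuous (fun a : Matrix.unitaryGroup (Fin q) ℂ => ((a⁻¹ : Matrix.unitaryGroup (Fin q) ℂ) : Matrix (Fin q) (Fin q) ℂ))
    rw [this]
    exact continuous_subtype_val.star

instance : CompactSpace (Matrix.unitaryGroup (Fin q) ℂ) := by
  apply isCompact_iff_compactSpace.mp
  have hsub : (Matrix.unitaryGroup (Fin q) ℂ : Set (Matrix (Fin q) (Fin q) ℂ)) ⊆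
      Set.univ.pi fun _ : Fin q => Set.univ.pi fun _ : Fin q => Metric.closedBall (0 : ℂ) 1 := by
    intro U hU
    intro i _ 
    intro j _
    simpa [Complex.dist_eq] using entry_norm_bound_of_unitary hU i j
  have hcomp : IsCompact (Set.univ.pi fun _ : Fin q => Set.univ.pi fun _ : Fin q =>
      Metric.closedBall (0 : ℂ) 1) :=
    isCompact_univ_pi fun _ => isCompact_univ_pi fun _ => isCompact_closedBall 0 1
  have hclosed : IsClosed (Matrix.unitaryGroup (Fin q) ℂ : Set (Matrix (Fin q) (Fin q) ℂ)) := by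
    have : (Matrix.unitaryGroup (Fin q) ℂ : Set (Matrix (Fin q) (Fin q) ℂ)) =
        (fun U : Matrix (Fin q) (Fin q) ℂ => star U * U) ⁻¹' {1} ∩
        (fun U : Matrix (Fin q) (Fin q) ℂ => U * star U) ⁻¹' {1} := by
      ext U
      simp [Matrix.mem_unitaryGroup_iff, Unitary.mem_iff, Set.mem_inter_iff]
      try tauto
    rw [this]
    exact ((isClosed_singleton.preimage (continuous_id.star.matrix_mul continuous_id)).inter
      (isClosed_singleton.preimage (continuous_id.matrix_mul continuous_id.star)))
  exact hcomp.of_isClosed_subset hclosed hsub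

/-- The unit-normalized Haar measure on the unitary group `U(q)`:
the Haar measure normalized so that the total mass of `U(q)` is `1`. -/
noncomputable def haarU : Measure (Matrix.unitaryGroup (Fin q) ℂ) :=
  Measure.haarMeasure (⊤ : TopologicalSpace.PositiveCompacts (Matrix.unitaryGroup (Fin q) ℂ))

/-- The `t`-fold Kronecker power `(A ⊗ Ā)^{⊗ t}`, realized as a matrix whose rows and
columns are indexed by `Fin t → Fin q × Fin q`: the entry at `(i, j)` is
`∏ k, A (i k).1 (j k).1 * conj (A (i k).2 (j k).2)`. -/
noncomputable def kronPow (t : ℕ) (A : Matrix (Fin q) (Fin q) ℂ) :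
    Matrix (Fin t → Fin q × Fin q) (Fin t → Fin q × Fin q) ℂ :=
  Matrix.of fun i j => ∏ k : Fin t, (A (i k).1 (j k).1 * (starRingEnd ℂ) (A (i k).2 (j k).2))


/-! Let `ρ(U) = (U ⊗ Ū)^{⊗t}` (`kronPow`), a representation of `U(q)` with `tr ρ(U) = |tr U|^{2t}`.
The averages `P = |G|⁻¹ ∑_{g ∈ G} ρ(g)` and `Q = ∫ ρ(U) dU` are idempotents, and `Q` absorbs every
`ρ(g)` on either side, so `PQ = QP = Q`. Hence `P - Q` is idempotent, so its trace is its rank,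
a natural number; and that trace is the difference of the two moments. -/

open scoped ComplexConjugate ComplexOrder

namespace Matrix

variable {n : Type*}

theorem trace_eq_rank_of_isIdempotentElem [Fintype n] [DecidableEq n] {K : Type*} [Field K]
    {P : Matrix n n K} (hP : IsIdempotentElem P) : P.trace = P.rank := by
  have hP' := LinearMap.IsIdempotentElem.isProj_range (toLin' P) (hP.map toLinAlgEquiv')
  rw [← trace_toLin'_eq, hP'.trace]
  rfl

section Average

variable {K 𝕜 : Type*} [RCLike 𝕜] [MeasurableSpace K] {μ : Measure K} {f : K → Matrix n n 𝕜}

noncomputable def average (μ : Measure K) (f : K → Matrix n n 𝕜) : Matrix n n 𝕜 :=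
  of fun i j => ∫ g, f g i j ∂μ

theorem average_const [IsProbabilityMeasure μ] (B : Matrix n n 𝕜) :
    average μ (fun _ => B) = B := by
  ext i j
  simp [average]

variable [Fintype n]

theorem trace_average (hf : ∀ i j, Integrable (fun g => f g i j) μ) :
    (average μ f).trace = ∫ g, (f g).trace ∂μ :=
  (integral_finsetSum _ fun i _ => hf i i).symm

theorem mul_average (hf : ∀ i j, Integrable (fun g => f g i j) μ) (A : Matrix n n 𝕜) :
    A * average μ f = average μ (fun g => A * f g) := by
  ext i j
  simp only [average, mul_apply, of_apply, ← integral_const_mul]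
  exact (integral_finsetSum _ fun m _ => (hf m j).const_mul _).symm

theorem average_mul (hf : ∀ i j, Integrable (fun g => f g i j) μ) (B : Matrix n n 𝕜) :
    average μ f * B = average μ (fun g => f g * B) := by
  ext i j
  simp only [average, mul_apply, of_apply, ← integral_mul_const]
  exact (integral_finsetSum _ fun m _ => (hf i m).mul_const _).symm

theorem average_mul_eq_of_forall_mul_eq [IsProbabilityMeasure μ]
    (hf : ∀ i j, Integrable (fun g => f g i j) μ) {B : Matrix n n 𝕜} (hB : ∀ g, f g * B = B) :
    average μ f * B = B := by
  simp only [average_mul hf, hB, average_const]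

variable [DecidableEq n] [Group K] [MeasurableMul K] (ρ : K →* Matrix n n 𝕜)

theorem monoidHom_mul_average [μ.IsMulLeftInvariant]
    (hρ : ∀ i j, Integrable (fun g => ρ g i j) μ) (h : K) :
    ρ h * average μ ρ = average μ ρ := by
  rw [mul_average hρ]
  ext i j
  simp only [average, of_apply, ← map_mul]
  exact integral_mul_left_eq_self (μ := μ) (fun g => ρ g i j) h

theorem average_mul_monoidHom [μ.IsMulRightInvariant]
    (hρ : ∀ i j, Integrable (fun g => ρ g i j) μ) (h : K) :
    average μ ρ * ρ h = average μ ρ := by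
  rw [average_mul hρ]
  ext i j
  simp only [average, of_apply, ← map_mul]
  exact integral_mul_right_eq_self (μ := μ) (fun g => ρ g i j) h

end Average

section FinAverage

variable [Fintype n] {K 𝕜 : Type*} [Field 𝕜] [Fintype K] {f : K → Matrix n n 𝕜}

def finAverage (f : K → Matrix n n 𝕜) : Matrix n n 𝕜 :=
  (Fintype.card K : 𝕜)⁻¹ • ∑ g, f g

theorem trace_finAverage : (finAverage f).trace = (Fintype.card K : 𝕜)⁻¹ * ∑ g, (f g).trace := by
  rw [finAverage, trace_smul, trace_sum, smul_eq_mul]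

theorem monoidHom_mul_finAverage [DecidableEq n] [Group K] (ρ : K →* Matrix n n 𝕜) (h : K) :
    ρ h * finAverage ρ = finAverage ρ := by
  rw [finAverage, Matrix.mul_smul, Finset.mul_sum]
  simp only [← map_mul]
  exact congrArg _ (Equiv.sum_comp (Equiv.mulLeft h) ρ)

variable [CharZero 𝕜] [Nonempty K]

theorem finAverage_mul_eq_of_forall_mul_eq {B : Matrix n n 𝕜} (hB : ∀ g, f g * B = B) :
    finAverage f * B = B := by
  rw [finAverage, smul_mul, Finset.sum_mul, Finset.sum_congr rfl fun g _ => hB g,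
    Finset.sum_const, Finset.card_univ, ← Nat.cast_smul_eq_nsmul 𝕜, smul_smul,
    inv_mul_cancel₀ (Nat.cast_ne_zero.2 Fintype.card_ne_zero), one_smul]

theorem mul_finAverage_eq_of_forall_mul_eq {B : Matrix n n 𝕜} (hB : ∀ g, B * f g = B) :
    B * finAverage f = B := by
  rw [finAverage, Matrix.mul_smul, Finset.mul_sum, Finset.sum_congr rfl fun g _ => hB g,
    Finset.sum_const, Finset.card_univ, ← Nat.cast_smul_eq_nsmul 𝕜, smul_smul,
    inv_mul_cancel₀ (Nat.cast_ne_zero.2 Fintype.card_ne_zero), one_smul]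

end FinAverage

end Matrix

theorem MeasureTheory.Measure.isMulRightInvariant_of_isProbabilityMeasure {G : Type*} [Group G]
    [TopologicalSpace G] [IsTopologicalGroup G] [LocallyCompactSpace G] [MeasurableSpace G]
    [BorelSpace G] (μ : Measure G) [μ.IsHaarMeasure] [IsProbabilityMeasure μ] :
    μ.IsMulRightInvariant where
  map_mul_right_eq_self g := by
    have : IsProbabilityMeasure (μ.map (· * g)) :=
      isProbabilityMeasure_map (measurable_mul_const g).aemeasurable
    exact isHaarMeasure_eq_of_isProbabilityMeasure _ _

instance : (haarU q).IsHaarMeasure := Measure.isHaarMeasure_haarMeasure _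

instance : IsProbabilityMeasure (haarU q) :=
  ⟨by rw [haarU, ← TopologicalSpace.PositiveCompacts.coe_top]; exact Measure.haarMeasure_self⟩

instance : (haarU q).IsMulRightInvariant :=
  Measure.isMulRightInvariant_of_isProbabilityMeasure _

section KronPow

variable (t : ℕ)

theorem kronPow_one : kronPow q t 1 = 1 := by
  have h1 (a b : Fin q × Fin q) :
      (1 : Matrix (Fin q) (Fin q) ℂ) a.1 b.1 * conj ((1 : Matrix (Fin q) (Fin q) ℂ) a.2 b.2) =
        if a = b then 1 else 0 := by
    simp only [one_apply, Prod.ext_iff]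
    split_ifs <;> simp_all
  ext i j
  rw [kronPow, of_apply, Finset.prod_congr rfl fun k _ => h1 (i k) (j k), Fintype.prod_boole,
    one_apply]
  congr 1
  exact propext funext_iff.symm

theorem kronPow_mul (A B : Matrix (Fin q) (Fin q) ℂ) :
    kronPow q t (A * B) = kronPow q t A * kronPow q t B := by
  ext i j
  simp only [kronPow, mul_apply, of_apply, ← Finset.prod_mul_distrib]
  rw [← Fintype.prod_sum fun k (p : Fin q × Fin q) =>
    A (i k).1 p.1 * conj (A (i k).2 p.2) * (B p.1 (j k).1 * conj (B p.2 (j k).2))]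
  refine Finset.prod_congr rfl fun k _ => ?_
  simp only [map_sum, map_mul, Finset.sum_mul_sum, Fintype.sum_prod_type]
  exact Finset.sum_congr rfl fun a _ => Finset.sum_congr rfl fun b _ => mul_mul_mul_comm _ _ _ _

theorem trace_kronPow (A : Matrix (Fin q) (Fin q) ℂ) :
    (kronPow q t A).trace = ((‖A.trace‖ ^ (2 * t) : ℝ) : ℂ) := by
  have h : ∑ p : Fin q × Fin q, A p.1 p.1 * conj (A p.2 p.2) = ((‖A.trace‖ ^ 2 : ℝ) : ℂ) := by
    simp only [Fintype.sum_prod_type]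
    rw [← Finset.sum_mul_sum, ← map_sum]
    change A.trace * conj A.trace = _
    rw [Complex.mul_conj, Complex.sq_norm]
  calc (kronPow q t A).trace
      = ∏ _k : Fin t, ∑ p : Fin q × Fin q, A p.1 p.1 * conj (A p.2 p.2) :=
        (Fintype.prod_sum fun _ (p : Fin q × Fin q) => A p.1 p.1 * conj (A p.2 p.2)).symm
    _ = ((‖A.trace‖ ^ (2 * t) : ℝ) : ℂ) := by
        rw [h, Finset.prod_const, Finset.card_univ, Fintype.card_fin, ← Complex.ofReal_pow, pow_mul]

theorem continuous_kronPow : Continuous (kronPow q t) :=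
  continuous_matrix fun i j => by unfold kronPow; fun_prop

@[simps]
noncomputable def kronPowHom : Matrix (Fin q) (Fin q) ℂ →*
    Matrix (Fin t → Fin q × Fin q) (Fin t → Fin q × Fin q) ℂ where
  toFun := kronPow q t
  map_one' := kronPow_one q t
  map_mul' := kronPow_mul q t

end KronPow

theorem trace_moment_average_ge_haar (t : ℕ)
    (G : Subgroup (Matrix.unitaryGroup (Fin q) ℂ)) [Fintype G] :
    (Fintype.card G : ℝ)⁻¹ *
        ∑ g : G, norm
          (Matrix.trace ((g : Matrix.unitaryGroup (Fin q) ℂ) : Matrix (Fin q) (Fin q) ℂ)) ^ (2 * t)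
      ≥ ∫ U : Matrix.unitaryGroup (Fin q) ℂ,
          norm (Matrix.trace ((U : Matrix (Fin q) (Fin q) ℂ))) ^ (2 * t) ∂(haarU q) := by
  set ρ := (kronPowHom q t).comp (unitaryGroup (Fin q) ℂ).subtype
  have hρ (i j) : Integrable (fun U => ρ U i j) (haarU q) :=
    (((continuous_kronPow q t).comp continuous_subtype_val).matrix_elem i j
      ).integrable_of_hasCompactSupport (.of_compactSpace _)
  set P := finAverage (ρ.comp G.subtype)
  set Q := average (haarU q) ρ
  have hP : IsIdempotentElem P := finAverage_mul_eq_of_forall_mul_eq (monoidHom_mul_finAverage _)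
  have hQ : IsIdempotentElem Q := average_mul_eq_of_forall_mul_eq hρ (monoidHom_mul_average ρ hρ)
  have hPQ : P * Q = Q := finAverage_mul_eq_of_forall_mul_eq (monoidHom_mul_average ρ hρ ·)
  have hQP : Q * P = Q := mul_finAverage_eq_of_forall_mul_eq (average_mul_monoidHom ρ hρ ·)
  obtain ⟨r, hr⟩ : ∃ r : ℕ, (P - Q).trace = r :=
    ⟨_, trace_eq_rank_of_isIdempotentElem (hQ.sub hP hQP hPQ)⟩
  simp only [P, Q, trace_sub, trace_finAverage, trace_average hρ, ρ, MonoidHom.comp_apply,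
    kronPowHom_apply, Submonoid.coe_subtype, Subgroup.coe_subtype, trace_kronPow,
    integral_complex_ofReal] at hr
  rw [ge_iff_le, ← sub_nonneg, ← Complex.zero_le_real]
  push_cast at hr ⊢
  rw [hr]
  exact Nat.cast_nonneg r
end

section
/- Let G be a finite group acting by unitary operators ρ(g) on a finite-dimensional complex inner product space V. Let W ⊆ V be a G-invariant subspace on which the restricted action is irreducible with character λ. Let M ⊆ End(V) be a subspace invariant under the conjugation action E ↦ ρ(g) ∘ E ∘ ρ(g)⁻¹, and let χ_M(g) denote the trace of this conjugation action of g on M. If (1/|G|)·Σ_{g∈G} |λ(g)|²·χ_M(g) = 0, then for every E ∈ M and all ψ, φ ∈ W, the inner product ⟨ψ, E φ⟩ = 0. -/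
/-!
The compression `E ↦ P_W ∘ E|_W` (with `P_W` the orthogonal projection onto `W`) is a
`G`-equivariant map from `M` to `End W`: unitarity makes `P_W` commute with the action. The
dimension of the space of such intertwiners is the average over `G` of
`χ_{End W}(g) · χ_M(g⁻¹)`, and for a unitary `W` we have `χ_{End W}(g) = |λ(g)|²`, which is
invariant under `g ↦ g⁻¹`. So the hypothesis says that there are no nonzero intertwiners
`M → End W`; hence the compression vanishes, and `⟪ψ, E φ⟫ = ⟪ψ, P_W (E φ)⟫ = 0`.
-/

open scoped InnerProductSpace
open LinearMap

theorem LinearMap.trace_adjoint {𝕜 E : Type*} [RCLike 𝕜] [NormedAddCommGroup E]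
    [InnerProductSpace 𝕜 E] [FiniteDimensional 𝕜 E] (T : E →ₗ[𝕜] E) :
    trace 𝕜 E (adjoint T) = star (trace 𝕜 E T) := by
  let b := stdOrthonormalBasis 𝕜 E
  rw [trace_eq_matrix_trace 𝕜 b.toBasis, trace_eq_matrix_trace 𝕜 b.toBasis, toMatrix_adjoint,
    Matrix.trace_conjTranspose]

theorem Subrepresentation.isIntertwiningMap_subtype {k G V : Type*} [Semiring k] [Monoid G]
    [AddCommMonoid V] [Module k V] {ρ : Representation k G V} (K : Subrepresentation ρ) :
    K.toRepresentation.IsIntertwiningMap ρ K.toSubmodule.subtype :=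
  ⟨fun _ _ => rfl⟩

theorem Representation.IsIntertwiningMap.comp {k G U V W : Type*} [Semiring k] [Monoid G]
    [AddCommMonoid U] [Module k U] [AddCommMonoid V] [Module k V] [AddCommMonoid W] [Module k W]
    {ρ : Representation k G V} {σ : Representation k G W} {τ : Representation k G U}
    {f : V →ₗ[k] W} {h : W →ₗ[k] U} (hh : σ.IsIntertwiningMap τ h)
    (hf : ρ.IsIntertwiningMap σ f) : ρ.IsIntertwiningMap τ (h ∘ₗ f) :=
  ⟨fun g v => by rw [comp_apply, hf.isIntertwining, hh.isIntertwining, comp_apply]⟩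

namespace Representation

variable {G k V W V' W' : Type*} [Group G]

theorem IsIntertwiningMap.llcomp_comp_lcomp [CommSemiring k] [AddCommMonoid V] [Module k V]
    [AddCommMonoid W] [Module k W] [AddCommMonoid V'] [Module k V'] [AddCommMonoid W']
    [Module k W'] {ρ : Representation k G V} {σ : Representation k G W}
    {ρ' : Representation k G V'} {σ' : Representation k G W'} {f : V' →ₗ[k] V} {h : W →ₗ[k] W'}
    (hf : ρ'.IsIntertwiningMap ρ f) (hh : σ.IsIntertwiningMap σ' h) :
    (linHom ρ σ).IsIntertwiningMap (linHom ρ' σ') (llcomp k V' W W' h ∘ₗ lcomp k W f) :=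
  ⟨fun g T => by ext v; simp [linHom_apply, hf.isIntertwining, hh.isIntertwining]⟩

section Field

variable [Field k] [AddCommGroup V] [Module k V] [FiniteDimensional k V]
  [AddCommGroup W] [Module k W] [FiniteDimensional k W]

theorem char_linHom_self_inv (ρ : Representation k G V) (g : G) :
    (linHom ρ ρ).character g⁻¹ = (linHom ρ ρ).character g := by
  rw [char_linHom, char_linHom, inv_inv, mul_comm]

theorem IsIntertwiningMap.eq_zero_of_sum_char_mul_char_eq_zero [CharZero k] [Fintype G]
    {ρ : Representation k G V} {σ : Representation k G W} {f : V →ₗ[k] W}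
    (hf : ρ.IsIntertwiningMap σ f) (h : ∑ g : G, σ.character g * ρ.character g⁻¹ = 0) :
    f = 0 := by
  have : Invertible (Nat.card G : k) := invertibleOfNonzero (Nat.cast_ne_zero.2 Nat.card_pos.ne')
  have hrank := card_inv_mul_sum_char_eq_finrank (linHom ρ σ)
  simp_rw [char_linHom, mul_comm (ρ.character _), h, mul_zero] at hrank
  have hbot : (linHom ρ σ).invariants = ⊥ :=
    Submodule.finrank_eq_zero.1 (by exact_mod_cast hrank.symm)
  have hmem : f ∈ (linHom ρ σ).invariants :=
    (mem_linHom_invariants_iff_isIntertwining f).2 hf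
  simpa [hbot] using hmem

end Field

section Unitary

variable {𝕜 E : Type*} [RCLike 𝕜] [NormedAddCommGroup E] [InnerProductSpace 𝕜 E]

def IsUnitary (ρ : Representation 𝕜 G E) : Prop :=
  ∀ g x y, ⟪ρ g x, ρ g y⟫_𝕜 = ⟪x, y⟫_𝕜

variable {ρ : Representation 𝕜 G E}

theorem IsUnitary.inner_apply_left (hρ : ρ.IsUnitary) (g : G) (x y : E) :
    ⟪ρ g x, y⟫_𝕜 = ⟪x, ρ g⁻¹ y⟫_𝕜 := by
  rw [← hρ g x (ρ g⁻¹ y), self_inv_apply]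

theorem IsUnitary.adjoint_apply [FiniteDimensional 𝕜 E] (hρ : ρ.IsUnitary) (g : G) :
    adjoint (ρ g) = ρ g⁻¹ :=
  ((eq_adjoint_iff _ _).2 fun x y => by rw [hρ.inner_apply_left, inv_inv]).symm

theorem IsUnitary.char_inv [FiniteDimensional 𝕜 E] (hρ : ρ.IsUnitary) (g : G) :
    ρ.character g⁻¹ = star (ρ.character g) := by
  rw [character, ← hρ.adjoint_apply, trace_adjoint, character]

theorem IsUnitary.char_linHom_self [FiniteDimensional 𝕜 E] (hρ : ρ.IsUnitary) (g : G) :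
    (linHom ρ ρ).character g = (‖ρ.character g‖ : 𝕜) ^ 2 := by
  rw [char_linHom, hρ.char_inv, ← RCLike.conj_mul]
  rfl

theorem IsUnitary.isIntertwiningMap_orthogonalProjectionOnto (hρ : ρ.IsUnitary)
    (K : Subrepresentation ρ) [K.toSubmodule.HasOrthogonalProjection] :
    ρ.IsIntertwiningMap K.toRepresentation
      (K.toSubmodule.orthogonalProjectionOnto : E →ₗ[𝕜] K.toSubmodule) := by
  refine ⟨fun g x => Subtype.ext ?_⟩
  refine Submodule.eq_starProjection_of_mem_of_inner_eq_zero
    (K.apply_mem_toSubmodule g (Submodule.coe_mem _)) fun w hw => ?_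
  change ⟪ρ g x - ρ g (K.toSubmodule.starProjection x), w⟫_𝕜 = 0
  rw [← map_sub, hρ.inner_apply_left]
  exact Submodule.inner_left_of_mem_orthogonal (K.apply_mem_toSubmodule _ hw)
    (Submodule.sub_starProjection_mem_orthogonal x)

end Unitary

end Representation

open Representation in
theorem inner_eq_zero_of_twisted_average_zero_general
    {G : Type*} [Group G] [Fintype G]
    {V : Type*} [NormedAddCommGroup V] [InnerProductSpace ℂ V] [FiniteDimensional ℂ V]
    (ρ : G →* (V →ₗ[ℂ] V))
    (hunitary : ∀ g : G, ∀ ψ φ : V, ⟪ρ g ψ, ρ g φ⟫_ℂ = ⟪ψ, φ⟫_ℂ)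
    (W : Submodule ℂ V)
    (hWinv : ∀ g : G, ∀ v ∈ W, ρ g v ∈ W)
    (lam : G → ℂ) (hlam : ∀ g : G, lam g = LinearMap.trace ℂ W ((ρ g).restrict (hWinv g)))
    (M : Submodule ℂ (V →ₗ[ℂ] V))
    (hMinv : ∀ g : G, ∀ E ∈ M, (ρ g) ∘ₗ E ∘ₗ (ρ g⁻¹) ∈ M)
    (Φ : G → (M →ₗ[ℂ] M))
    (hΦ : ∀ g : G, ∀ E : M, ((Φ g E : V →ₗ[ℂ] V)) = (ρ g) ∘ₗ (E : V →ₗ[ℂ] V) ∘ₗ (ρ g⁻¹))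
    (chiM : G → ℂ) (hchiM : ∀ g : G, chiM g = LinearMap.trace ℂ M (Φ g))
    (havg : (Fintype.card G : ℂ)⁻¹ * ∑ g : G, (‖lam g‖ : ℂ) ^ 2 * chiM g = 0) :
    ∀ E ∈ M, ∀ ψ ∈ W, ∀ φ ∈ W, ⟪ψ, E φ⟫_ℂ = 0 := by
  have hρ : IsUnitary ρ := hunitary
  let ρW : Subrepresentation ρ := ⟨W, fun g _ hv => hWinv g _ hv⟩
  let ρM : Subrepresentation (linHom ρ ρ) := ⟨M, fun g _ hE => hMinv g _ hE⟩
  have hρW : ρW.toRepresentation.IsUnitary := fun g x y => hρ g x y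
  have hcharW (g : G) : ρW.toRepresentation.character g = lam g := (hlam g).symm
  have hcharM (g : G) : ρM.toRepresentation.character g = chiM g := by
    rw [hchiM]
    exact congrArg (trace ℂ M) (LinearMap.ext fun E => Subtype.ext (hΦ g E).symm)
  have hcompression := ((ρW.isIntertwiningMap_subtype.llcomp_comp_lcomp
    (hρ.isIntertwiningMap_orthogonalProjectionOnto ρW)).comp ρM.isIntertwiningMap_subtype)
  have hsum : ∑ g : G, (linHom ρW.toRepresentation ρW.toRepresentation).character g *
      ρM.toRepresentation.character g⁻¹ = 0 := by
    rw [← Equiv.sum_comp (Equiv.inv G)]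
    simp_rw [Equiv.inv_apply, inv_inv, char_linHom_self_inv, hρW.char_linHom_self, hcharW,
      hcharM]
    exact (mul_eq_zero.1 havg).resolve_left
      (inv_ne_zero (Nat.cast_ne_zero.2 Fintype.card_ne_zero))
  have hzero := hcompression.eq_zero_of_sum_char_mul_char_eq_zero hsum
  intro E hE ψ hψ φ hφ
  have hPEφ : W.orthogonalProjectionOnto (E φ) = 0 := congr($hzero ⟨E, hE⟩ ⟨φ, hφ⟩)
  calc ⟪ψ, E φ⟫_ℂ = ⟪(⟨ψ, hψ⟩ : W), W.orthogonalProjectionOnto (E φ)⟫_ℂ := by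
        rw [Submodule.inner_orthogonalProjectionOnto_eq_of_mem_left]
    _ = 0 := by rw [hPEφ, inner_zero_right]

/-- Let a finite group `G` act by unitary operators `ρ g` on a finite-dimensional
complex inner product space `V`, let `W ⊆ V` be a `G`-invariant subspace on which the restricted
action is irreducible with character `lam`, and let `M ⊆ End(V)` be a subspace invariant under
conjugation `E ↦ ρ g ∘ E ∘ ρ g⁻¹`, with `chiM g` the trace of the conjugation action of `g`
on `M` (here `Φ g` is the conjugation action of `g` on `M`). If
`(1/|G|) · Σ_g |lam g|² · chiM g = 0`, then `⟪ψ, E φ⟫ = 0` for every `E ∈ M`, `ψ, φ ∈ W`. -/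
theorem inner_eq_zero_of_twisted_average_zero
    {G : Type*} [Group G] [Fintype G]
    {V : Type*} [NormedAddCommGroup V] [InnerProductSpace ℂ V] [FiniteDimensional ℂ V]
    (ρ : G →* (V →ₗ[ℂ] V))
    (hunitary : ∀ g : G, ∀ ψ φ : V, ⟪ρ g ψ, ρ g φ⟫_ℂ = ⟪ψ, φ⟫_ℂ)
    (W : Submodule ℂ V) (hW : W ≠ ⊥)
    (hWinv : ∀ g : G, ∀ v ∈ W, ρ g v ∈ W)
    (hWirr : ∀ p : Submodule ℂ V, p ≤ W → (∀ g : G, ∀ v ∈ p, ρ g v ∈ p) → p = ⊥ ∨ p = W)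
    (lam : G → ℂ) (hlam : ∀ g : G, lam g = LinearMap.trace ℂ W ((ρ g).restrict (hWinv g)))
    (M : Submodule ℂ (V →ₗ[ℂ] V))
    (hMinv : ∀ g : G, ∀ E ∈ M, (ρ g) ∘ₗ E ∘ₗ (ρ g⁻¹) ∈ M)
    (Φ : G → (M →ₗ[ℂ] M))
    (hΦ : ∀ g : G, ∀ E : M, ((Φ g E : V →ₗ[ℂ] V)) = (ρ g) ∘ₗ (E : V →ₗ[ℂ] V) ∘ₗ (ρ g⁻¹))
    (chiM : G → ℂ) (hchiM : ∀ g : G, chiM g = LinearMap.trace ℂ M (Φ g))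
    (havg : (Fintype.card G : ℂ)⁻¹ * ∑ g : G, (‖lam g‖ : ℂ) ^ 2 * chiM g = 0) :
    ∀ E ∈ M, ∀ ψ ∈ W, ∀ φ ∈ W, ⟪ψ, E φ⟫_ℂ = 0 :=
  inner_eq_zero_of_twisted_average_zero_general ρ hunitary W hWinv lam hlam M hMinv Φ hΦ chiM hchiM
    havg
end
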